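/- arXiv:1109.6914 — 5 statements merged into one kernel-verified Lean document; each statement's English description precedes it below -/
import Mathlib

section
/- The Egli-Milner ordering ≤_EM on K-spaces is contained in the lower ordering ≤_L, which is contained in the will-answer ordering ≤_WA; moreover both inclusions are strict (there exist K-spaces related by ≤_L but not ≤_EM, and by ≤_WA but not ≤_L). -/
open Set

section Defs

variable {α : Type*}

/-- A K-space over `W`: a collection of nonempty subsets of `W` covering `W`. -/
def Covers (K : Set (Set α)) (W : Set α) : Prop :=
  (∀ X ∈ K, X.Nonempty) ∧ ⋃₀ K = W

/-- A partition of `W`: a K-space whose members are pairwise disjoint. -/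
def IsPart (K : Set (Set α)) (W : Set α) : Prop :=
  Covers K W ∧ ∀ X ∈ K, ∀ Y ∈ K, X ≠ Y → X ∩ Y = ∅

/-- Upper (Smyth) ordering. -/
def leU (K₁ K₂ : Set (Set α)) : Prop := ∀ X₂ ∈ K₂, ∃ X₁ ∈ K₁, X₁ ⊆ X₂

/-- Lower (Hoare) ordering. -/
def leL (K₁ K₂ : Set (Set α)) : Prop := ∀ X₁ ∈ K₁, ∃ X₂ ∈ K₂, X₁ ⊆ X₂

/-- Egli-Milner ordering. -/
def leEM (K₁ K₂ : Set (Set α)) : Prop := leU K₁ K₂ ∧ leL K₁ K₂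

/-- `P₁` refines `P₂`: every block of `P₁` is contained in some block of `P₂`. -/
def Refines (P₁ P₂ : Set (Set α)) : Prop := ∀ X₁ ∈ P₁, ∃ X₂ ∈ P₂, X₁ ⊆ X₂

/-- `X` answers query `Q` relative to universe `U`. -/
def Answers (U X Q : Set α) : Prop := X ⊆ Q ∨ X ⊆ U \ Q

def CanAnswer (U : Set α) (K : Set (Set α)) (Q : Set α) : Prop := ∃ X ∈ K, Answers U X Q

def WillAnswer (U : Set α) (K : Set (Set α)) (Q : Set α) : Prop := ∀ X ∈ K, Answers U X Q

/-- Can-answer ordering relative to universe `U`. -/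
def leCA (U : Set α) (K₁ K₂ : Set (Set α)) : Prop :=
  ∀ Q ⊆ U, CanAnswer U K₂ Q → CanAnswer U K₁ Q

/-- Will-answer ordering relative to universe `U`. -/
def leWA (U : Set α) (K₁ K₂ : Set (Set α)) : Prop :=
  ∀ Q ⊆ U, WillAnswer U K₂ Q → WillAnswer U K₁ Q

/-- `K` can confirm fact `F`. -/
def CanConfirm (K : Set (Set α)) (F : Set α) : Prop := ∃ X ∈ K, X ⊆ F

/-- `K` can have uncertainty `F`. -/
def HasUncertainty (K : Set (Set α)) (F : Set α) : Prop := ∃ X ∈ K, F ⊆ X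

/-- The observation (equivalence class of attacker `A`) containing trace `t`. -/
def obsClass {T : Type*} (A : Setoid T) (t : T) : Set T := {u | A.r u t}

/-- The K-space of attacker `A` for system `S` with subject function `Φ`:
knowledge sets `Φ(O ∩ S)` for observations `O` with `O ∩ S ≠ ∅`. -/
def kspace {T D : Type*} (Φ : T → D) (S : Set T) (A : Setoid T) : Set (Set D) :=
  {X | ∃ t ∈ S, X = Φ '' (obsClass A t ∩ S)}

/-- `R` (a set of pairs) is an equivalence relation on the subset `V`. -/
def IsEROn (V : Set α) (R : Set (α × α)) : Prop :=
  R ⊆ V ×ˢ V ∧ (∀ v ∈ V, (v, v) ∈ R) ∧ (∀ x y, (x, y) ∈ R → (y, x) ∈ R) ∧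
    (∀ x y z, (x, y) ∈ R → (y, z) ∈ R → (x, z) ∈ R)

/-- The equivalence class of `v` under the relation-as-set-of-pairs `R`. -/
def classOf (R : Set (α × α)) (v : α) : Set α := {u | (u, v) ∈ R}

/-- The partition `⟦R⟧` of `V` corresponding to an equivalence relation `R` on `V`. -/
def classPart (V : Set α) (R : Set (α × α)) : Set (Set α) :=
  {C | ∃ v ∈ V, C = classOf R v}

end Defs

/-- `≤_EM ⊊ ≤_L ⊊ ≤_WA` on K-spaces. -/
theorem stmt4 :
    (∀ (α : Type) (V : Set α) (K₁ K₂ : Set (Set α)), Covers K₁ V → Covers K₂ V →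
        leEM K₁ K₂ → leL K₁ K₂) ∧
    (∀ (α : Type) (V : Set α) (K₁ K₂ : Set (Set α)), Covers K₁ V → Covers K₂ V →
        leL K₁ K₂ → leWA V K₁ K₂) ∧
    (∃ (V : Set ℕ) (K₁ K₂ : Set (Set ℕ)), Covers K₁ V ∧ Covers K₂ V ∧
        leL K₁ K₂ ∧ ¬ leEM K₁ K₂) ∧
    (∃ (V : Set ℕ) (K₁ K₂ : Set (Set ℕ)), Covers K₁ V ∧ Covers K₂ V ∧
        leWA V K₁ K₂ ∧ ¬ leL K₁ K₂) := by
  refine ⟨fun α V K₁ K₂ _ _ h => h.2, ?_, ?_, ?_⟩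
  · intro α V K₁ K₂ _ _ hL Q _ hWA X₁ hX₁
    obtain ⟨X₂, hX₂, hsub⟩ := hL X₁ hX₁
    rcases hWA X₂ hX₂ with h | h
    · exact Or.inl (hsub.trans h)
    · exact Or.inr (hsub.trans h)
  · refine ⟨{0, 1}, {{0, 1}}, {{0}, {0, 1}}, ?_, ?_, ?_, ?_⟩
    · exact ⟨fun X hX => hX ▸ ⟨0, by simp⟩, by simp⟩
    · constructor
      · rintro X (rfl | rfl)
        · exact ⟨0, rfl⟩
        · exact ⟨0, by simp⟩
      · ext x; simp [or_comm]
    · rintro X rfl; exact ⟨{0, 1}, by simp, subset_rfl⟩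
    · rintro ⟨hU, _⟩
      obtain ⟨X₁, hX₁, hsub⟩ := hU {0} (by simp)
      rw [Set.mem_singleton_iff] at hX₁
      subst hX₁
      have : (1 : ℕ) ∈ ({0} : Set ℕ) := hsub (by simp)
      simp at this
  · refine ⟨{0, 1, 2}, {{0, 1, 2}}, {{0, 1}, {1, 2}}, ?_, ?_, ?_, ?_⟩
    · exact ⟨fun X hX => hX ▸ ⟨0, by simp⟩, by simp⟩
    · constructor
      · rintro X (rfl | rfl)
        · exact ⟨0, by simp⟩
        · exact ⟨1, by simp⟩
      · ext x; simp; tauto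
    · intro Q hQ hWA X hX
      rw [Set.mem_singleton_iff] at hX
      subst hX
      have h1 : Answers ({0, 1, 2} : Set ℕ) {0, 1} Q := hWA {0, 1} (by simp)
      have h2 : Answers ({0, 1, 2} : Set ℕ) {1, 2} Q := hWA {1, 2} (by simp)
      rcases h1 with h1 | h1 <;> rcases h2 with h2 | h2
      · left
        intro x hx
        rcases hx with rfl | rfl | rfl
        · exact h1 (by simp)
        · exact h1 (by simp)
        · exact h2 (by simp)
      · exfalso
        have ha : (1 : ℕ) ∈ Q := h1 (by simp)
        have hb : (1 : ℕ) ∉ Q := (h2 (by simp)).2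
        exact hb ha
      · exfalso
        have ha : (1 : ℕ) ∈ Q := h2 (by simp)
        have hb : (1 : ℕ) ∉ Q := (h1 (by simp)).2
        exact hb ha
      · right
        intro x hx
        rcases hx with rfl | rfl | rfl
        · exact h1 (by simp)
        · exact h1 (by simp)
        · exact h2 (by simp)
    · intro hL
      obtain ⟨X₂, hX₂, hsub⟩ := hL {0, 1, 2} rfl
      rcases hX₂ with rfl | rfl
      · have : (2 : ℕ) ∈ ({0, 1} : Set ℕ) := hsub (by simp)
        simp at this
      · have : (0 : ℕ) ∈ ({1, 2} : Set ℕ) := hsub (by simp)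
        simp at this
end

section
/- The Egli-Milner ordering ≤_EM on K-spaces is contained in the upper ordering ≤_U, which is contained in the can-answer ordering ≤_CA; moreover both inclusions are strict. -/
open Set

/-- `≤_EM ⊊ ≤_U ⊊ ≤_CA` on K-spaces. -/
theorem stmt5 :
    (∀ (α : Type) (V : Set α) (K₁ K₂ : Set (Set α)), Covers K₁ V → Covers K₂ V →
        leEM K₁ K₂ → leU K₁ K₂) ∧
    (∀ (α : Type) (V : Set α) (K₁ K₂ : Set (Set α)), Covers K₁ V → Covers K₂ V →
        leU K₁ K₂ → leCA V K₁ K₂) ∧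
    (∃ (V : Set ℕ) (K₁ K₂ : Set (Set ℕ)), Covers K₁ V ∧ Covers K₂ V ∧
        leU K₁ K₂ ∧ ¬ leEM K₁ K₂) ∧
    (∃ (V : Set ℕ) (K₁ K₂ : Set (Set ℕ)), Covers K₁ V ∧ Covers K₂ V ∧
        leCA V K₁ K₂ ∧ ¬ leU K₁ K₂) := by
  refine ⟨fun α V K₁ K₂ _ _ h => h.1, ?_, ?_, ?_⟩
  · intro α V K₁ K₂ h₁ h₂ hU Q hQ ⟨X₂, hX₂, hans⟩
    obtain ⟨X₁, hX₁, hsub⟩ := hU X₂ hX₂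
    exact ⟨X₁, hX₁, hans.imp (fun h => hsub.trans h) (fun h => hsub.trans h)⟩
  · refine ⟨{0, 1}, {{0}, {1}, {0, 1}}, {{0}, {1}}, ?_, ?_, ?_, ?_⟩
    · constructor
      · rintro X (rfl | rfl | rfl) <;> simp
      · ext x; simp [sUnion_insert]; tauto
    · constructor
      · rintro X (rfl | rfl) <;> simp
      · ext x; simp [sUnion_insert]; tauto
    · rintro X₂ (rfl | rfl)
      · exact ⟨{0}, by simp, by simp⟩
      · exact ⟨{1}, by simp, by simp⟩
    · rintro ⟨-, hL⟩
      obtain ⟨X₂, hX₂, hsub⟩ := hL {0, 1} (by simp)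
      rcases hX₂ with rfl | rfl
      · exact absurd (hsub (by simp : (1:ℕ) ∈ ({0,1} : Set ℕ))) (by simp)
      · exact absurd (hsub (by simp : (0:ℕ) ∈ ({0,1} : Set ℕ))) (by simp)
  · refine ⟨{0, 1, 2}, {{0, 1}, {2}}, {{0}, {1, 2}}, ?_, ?_, ?_, ?_⟩
    · constructor
      · rintro X (rfl | rfl) <;> simp
      · ext x; simp [sUnion_insert]; tauto
    · constructor
      · rintro X (rfl | rfl) <;> simp
      · ext x; simp [sUnion_insert]; tauto
    · intro Q hQ _
      refine ⟨{2}, by simp, ?_⟩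
      by_cases h2 : (2:ℕ) ∈ Q
      · left; simpa using h2
      · right; intro x hx; simp at hx; subst hx
        exact ⟨by simp, h2⟩
    · intro hU
      obtain ⟨X₁, hX₁, hsub⟩ := hU {0} (by simp)
      rcases hX₁ with rfl | rfl
      · exact absurd (hsub (by simp : (1:ℕ) ∈ ({0,1} : Set ℕ))) (by simp)
      · exact absurd (hsub (by simp : (2:ℕ) ∈ ({2} : Set ℕ))) (by simp)
end

section
/- For partitions P₁, P₂ of V: if P₁ refines P₂ then P₁ ≤_U P₂, and if P₁ ≤_U P₂ then P₁ ≤_CA P₂; moreover neither implication can be reversed in general. -/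
open Set

/-
Refinement gives `≤_U`: every block of `P₂` contains a point, whose `P₁`-block lies in some
`P₂`-block, which by disjointness is the block we started from. A block answering a query passes
the answer on to its subsets, so `≤_U` gives `≤_CA`. Neither implication reverses: `≤_U` asks for
only one `P₁`-block inside each `P₂`-block, so other `P₁`-blocks may straddle two `P₂`-blocks; and a
partition with a singleton block can answer every query, hence is `≤_CA` below every partition of
the same set, whether or not it is `≤_U` below it.
-/

section General

variable {α : Type*}

theorem isPart_singleton {X : Set α} (hX : X.Nonempty) : IsPart {X} X := by
  refine ⟨⟨fun Y hY => (Set.mem_singleton_iff.mp hY) ▸ hX, Set.sUnion_singleton X⟩, ?_⟩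
  rintro Y rfl Z rfl hne
  exact absurd rfl hne

theorem IsPart.insert {K : Set (Set α)} {W X : Set α} (hK : IsPart K W) (hX : X.Nonempty)
    (hXW : Disjoint X W) : IsPart (insert X K) (X ∪ W) := by
  obtain ⟨⟨hne, hcover⟩, hdisj⟩ := hK
  have hXY : ∀ Y ∈ K, X ∩ Y = ∅ := fun Y hY =>
    Set.disjoint_iff_inter_eq_empty.mp (hXW.mono_right (hcover ▸ Set.subset_sUnion_of_mem hY))
  refine ⟨⟨?_, by rw [Set.sUnion_insert, hcover]⟩, ?_⟩
  · rintro Y (rfl | hY)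
    exacts [hX, hne Y hY]
  · rintro Y (rfl | hY) Z (rfl | hZ) hYZ
    · exact absurd rfl hYZ
    · exact hXY Z hZ
    · rw [Set.inter_comm]; exact hXY Y hY
    · exact hdisj Y hY Z hZ hYZ

theorem Refines.leU {V : Set α} {P₁ P₂ : Set (Set α)} (h : Refines P₁ P₂) (hP₁ : V ⊆ ⋃₀ P₁)
    (hP₂ : IsPart P₂ V) : leU P₁ P₂ := by
  obtain ⟨⟨hne, hcover⟩, hdisj⟩ := hP₂
  intro X₂ hX₂
  obtain ⟨v, hvX₂⟩ := hne X₂ hX₂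
  obtain ⟨X₁, hX₁, hvX₁⟩ := hP₁ (hcover ▸ Set.mem_sUnion_of_mem hvX₂ hX₂)
  obtain ⟨Y₂, hY₂, hX₁Y₂⟩ := h X₁ hX₁
  have hY₂X₂ : Y₂ = X₂ := by
    by_contra hYX
    have hv : v ∈ Y₂ ∩ X₂ := ⟨hX₁Y₂ hvX₁, hvX₂⟩
    rw [hdisj Y₂ hY₂ X₂ hX₂ hYX] at hv
    exact hv
  exact ⟨X₁, hX₁, hY₂X₂ ▸ hX₁Y₂⟩

theorem Answers.mono {U X Y Q : Set α} (h : Answers U Y Q) (hXY : X ⊆ Y) : Answers U X Q :=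
  h.imp hXY.trans hXY.trans

theorem leU.leCA {U : Set α} {K₁ K₂ : Set (Set α)} (h : leU K₁ K₂) : leCA U K₁ K₂ := by
  rintro Q - ⟨X₂, hX₂, hans⟩
  obtain ⟨X₁, hX₁, hX₁X₂⟩ := h X₂ hX₂
  exact ⟨X₁, hX₁, hans.mono hX₁X₂⟩

theorem canAnswer_of_singleton_mem {U : Set α} {K : Set (Set α)} {v : α} (hv : v ∈ U)
    (hK : {v} ∈ K) (Q : Set α) : CanAnswer U K Q := by
  refine ⟨{v}, hK, ?_⟩
  by_cases hvQ : v ∈ Q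
  · exact Or.inl (Set.singleton_subset_iff.mpr hvQ)
  · exact Or.inr (Set.singleton_subset_iff.mpr ⟨hv, hvQ⟩)

end General

theorem exists_leU_not_refines : ∃ (V : Set ℕ) (P₁ P₂ : Set (Set ℕ)), IsPart P₁ V ∧
    IsPart P₂ V ∧ leU P₁ P₂ ∧ ¬ Refines P₁ P₂ := by
  refine ⟨{0, 1} ∪ {2, 3}, {{0}, {2}, {1, 3}}, {{0, 1}, {2, 3}}, ?_, ?_, ?_, ?_⟩
  · have hV : ({0} ∪ ({2} ∪ {1, 3}) : Set ℕ) = {0, 1} ∪ {2, 3} := by ext; simp; omega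
    rw [← hV]
    exact ((isPart_singleton (by simp)).insert (by simp) (by simp)).insert (by simp) (by simp)
  · exact (isPart_singleton (by simp)).insert (by simp) (by simp)
  · rintro X₂ (rfl | rfl)
    · exact ⟨{0}, by simp, by simp⟩
    · exact ⟨{2}, by simp, by simp⟩
  · intro h
    obtain ⟨X₂, hX₂, hsub⟩ := h {1, 3} (by simp)
    rcases hX₂ with rfl | rfl
    · exact absurd (hsub (by simp : 3 ∈ ({1, 3} : Set ℕ))) (by simp)
    · exact absurd (hsub (by simp : 1 ∈ ({1, 3} : Set ℕ))) (by simp)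

theorem exists_leCA_not_leU : ∃ (V : Set ℕ) (P₁ P₂ : Set (Set ℕ)), IsPart P₁ V ∧
    IsPart P₂ V ∧ leCA V P₁ P₂ ∧ ¬ leU P₁ P₂ := by
  refine ⟨{0, 1} ∪ {2}, {{0, 1}, {2}}, {{0}, {1, 2}}, ?_, ?_, ?_, ?_⟩
  · exact (isPart_singleton (by simp)).insert (by simp) (by simp)
  · have hV : ({0} ∪ {1, 2} : Set ℕ) = {0, 1} ∪ {2} := by ext; simp; omega
    rw [← hV]
    exact (isPart_singleton (by simp)).insert (by simp) (by simp)
  · exact fun Q _ _ => canAnswer_of_singleton_mem (v := 2) (by simp) (by simp) Q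
  · intro h
    obtain ⟨X₁, hX₁, hsub⟩ := h {0} (by simp)
    rcases hX₁ with rfl | rfl
    · exact absurd (hsub (by simp : 1 ∈ ({0, 1} : Set ℕ))) (by simp)
    · exact absurd (hsub (by simp : 2 ∈ ({2} : Set ℕ))) (by simp)

/-- on partitions, refinement implies `≤_U` implies `≤_CA`,
and neither implication reverses. -/
theorem stmt8 :
    (∀ (α : Type) (V : Set α) (P₁ P₂ : Set (Set α)), IsPart P₁ V → IsPart P₂ V →
        Refines P₁ P₂ → leU P₁ P₂) ∧
    (∀ (α : Type) (V : Set α) (P₁ P₂ : Set (Set α)), IsPart P₁ V → IsPart P₂ V →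
        leU P₁ P₂ → leCA V P₁ P₂) ∧
    (∃ (V : Set ℕ) (P₁ P₂ : Set (Set ℕ)), IsPart P₁ V ∧ IsPart P₂ V ∧
        leU P₁ P₂ ∧ ¬ Refines P₁ P₂) ∧
    (∃ (V : Set ℕ) (P₁ P₂ : Set (Set ℕ)), IsPart P₁ V ∧ IsPart P₂ V ∧
        leCA V P₁ P₂ ∧ ¬ leU P₁ P₂) := by
  refine ⟨?_, ?_, exists_leU_not_refines, exists_leCA_not_leU⟩
  · exact fun _ _ _ _ h₁ h₂ h => h.leU h₁.1.2.ge h₂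
  · exact fun _ _ _ _ _ _ h => h.leCA
end

section
/- Let P be a partition of T (or of T_V ⊇ S), S a system, and A an attacker (equivalence relation on T). Then ⋃_{X∈P} K(S∩X, A) ≤_EM K(S, A): (i) every knowledge set of some S∩X is contained in a knowledge set of S for the same observation, and (ii) every knowledge set of S contains a knowledge set of S∩X for some X ∈ P. -/
/-!
Restricting the system to a block `X` only shrinks each knowledge set `Φ(O ∩ S)`, which gives
the lower half. For the upper half, an observation `O` meeting `S` in a trace `t` also meets
`S ∩ X` for the block `X` containing `t`, because the blocks cover the traces.
-/

open Set

section KSpace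

variable {T D : Type*} (Φ : T → D) (A : Setoid T)

lemma leL_biUnion {α ι : Type*} {s : Set ι} {K : ι → Set (Set α)} {K₂ : Set (Set α)}
    (h : ∀ i ∈ s, leL (K i) K₂) : leL (⋃ i ∈ s, K i) K₂ := by
  intro X hX
  obtain ⟨i, hi, hXi⟩ := mem_iUnion₂.mp hX
  exact h i hi X hXi

lemma image_obsClass_inter_subset {S' S : Set T} (h : S' ⊆ S) (t : T) :
    Φ '' (obsClass A t ∩ S') ⊆ Φ '' (obsClass A t ∩ S) :=
  image_mono (inter_subset_inter_right _ h)

lemma leL_kspace_of_subset {S' S : Set T} (h : S' ⊆ S) :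
    leL (kspace Φ S' A) (kspace Φ S A) := by
  rintro _ ⟨t, ht, rfl⟩
  exact ⟨_, ⟨t, h ht, rfl⟩, image_obsClass_inter_subset Φ A h t⟩

lemma leU_biUnion_kspace_inter {S : Set T} {P : Set (Set T)} (hS : S ⊆ ⋃₀ P) :
    leU (⋃ X ∈ P, kspace Φ (S ∩ X) A) (kspace Φ S A) := by
  rintro _ ⟨t, htS, rfl⟩
  obtain ⟨X, hXP, htX⟩ := hS htS
  exact ⟨_, mem_biUnion hXP ⟨t, ⟨htS, htX⟩, rfl⟩,
    image_obsClass_inter_subset Φ A inter_subset_left t⟩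

end KSpace

/-- for a partition `P` of the traces,
`⋃_{X ∈ P} K(S ∩ X, A) ≤_EM K(S, A)`. -/
theorem stmt14 {T D : Type*} (Φ : T → D) (S : Set T) (A : Setoid T)
    (P : Set (Set T)) (hP : IsPart P Set.univ) :
    leEM (⋃ X ∈ P, kspace Φ (S ∩ X) A) (kspace Φ S A) :=
  ⟨leU_biUnion_kspace_inter Φ A (hP.1.2.symm ▸ subset_univ S),
    leL_biUnion fun _ _ => leL_kspace_of_subset Φ A inter_subset_left⟩
end

section
/- Type 2 explicitness theorem: let ⟨Q, g⟩ be a Type 2 policy for subject domain V (Q a partition of V, and for each W ∈ Q, g W a Type 1 policy ⟨P_W, f_W⟩ over W), S ∈ Sys(V), A an equivalence relation on T, o ∈ {U,L,EM,CA,WA}. For each W let R_{g W} = ⋀_{X∈P_W} f_W X (an equivalence relation on W) and R†_{g W} = R_{g W} ∪ All_{V\W}. If for every W ∈ Q, S_W = S ∩ T_W has subject domain W and satisfies g W (i.e., each block of P_W cut with S_W covers W and its K-space dominates in order o the corresponding f_W-partition), then ⟦≈_Q ∧ ⋀_{W∈Q} R†_{g W}⟧ ≤_o K(S, A). -/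
open Set

/-! Within a block `W ∈ Q`, the component `R†_{g W}` of the relation cannot relate a point of `W`
through `All_{V\W}`, so every class of `≈_Q ∧ ⋀ R†` at a point of `W` lies inside the class of
every `f W X`. On the trace side, an observation of `S` contains the corresponding observation of
each sub-system `S ∩ Φ⁻¹ W ∩ X`, and the latter lies inside `W`. These two inclusions transport
each of the five local comparisons to the global one; for the query orders a query `F ⊆ V` is
traded for `F ∩ W ⊆ W` and back. -/

section Answers

variable {α : Type*} {U W X Y F : Set α}

theorem Answers.mono_s18 (hYX : Y ⊆ X) (h : Answers U X F) : Answers U Y F :=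
  h.imp hYX.trans hYX.trans

theorem Answers.restrict (hXW : X ⊆ W) (h : Answers U X F) : Answers W X (F ∩ W) :=
  h.imp (fun h => subset_inter h hXW) fun h _ hx => ⟨hXW hx, fun hF => (h hx).2 hF.1⟩

theorem Answers.extend (hWU : W ⊆ U) (h : Answers W X (F ∩ W)) : Answers U X F :=
  h.imp (fun h => h.trans inter_subset_left)
    fun h _ hx => ⟨hWU (h hx).1, fun hF => (h hx).2 ⟨hF, (h hx).1⟩⟩

end Answers

section Kspace

variable {T D : Type*} {Φ : T → D} {A : Setoid T} {S S' : Set T}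

theorem image_obsClass_inter_mono (h : S' ⊆ S) (t : T) :
    Φ '' (obsClass A t ∩ S') ⊆ Φ '' (obsClass A t ∩ S) :=
  image_mono (inter_subset_inter_right _ h)

theorem subset_of_mem_kspace {W : Set D} (hS : S ⊆ Φ ⁻¹' W) {Y : Set D}
    (hY : Y ∈ kspace Φ S A) : Y ⊆ W := by
  obtain ⟨t, -, rfl⟩ := hY
  rintro _ ⟨u, ⟨-, hu⟩, rfl⟩
  exact hS hu

theorem kspace_leL_of_subset (h : S' ⊆ S) : leL (kspace Φ S' A) (kspace Φ S A) := by
  rintro _ ⟨t, ht, rfl⟩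
  exact ⟨_, ⟨t, h ht, rfl⟩, image_obsClass_inter_mono h t⟩

end Kspace

section Type2Policy

variable {T D : Type*} {Φ : T → D} {A : Setoid T} {S : Set T} {V : Set D}
  {Q : Set (Set D)} {P : Set D → Set (Set T)} {f : Set D → Set T → Set (D × D)}
  {R : Set (D × D)}

/-- The relation `≈_Q ∧ ⋀_{W ∈ Q} R†_{g W}` of a Type 2 policy `⟨Q, g⟩` with `g W = ⟨P W, f W⟩`. -/
def policyRel (V : Set D) (Q : Set (Set D)) (P : Set D → Set (Set T))
    (f : Set D → Set T → Set (D × D)) : Set (D × D) :=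
  (⋃ W ∈ Q, W ×ˢ W) ∩ ⋂ W ∈ Q, ((⋂ X ∈ P W, f W X) ∪ (V \ W) ×ˢ (V \ W))

theorem classOf_policyRel_subset {W : Set D} {X : Set T} {v : D} (hW : W ∈ Q) (hX : X ∈ P W)
    (hv : v ∈ W) : classOf (policyRel V Q P f) v ⊆ classOf (f W X) v := by
  rintro u ⟨-, hu⟩
  rcases mem_iInter₂.mp hu W hW with h | h
  · exact mem_iInter₂.mp h X hX
  · exact absurd hv h.2.2

theorem exists_mem_block (hSV : S ⊆ Φ ⁻¹' V) (hQ : ⋃₀ Q = V)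
    (hP : ∀ W ∈ Q, ⋃₀ P W = Φ ⁻¹' W) {t : T} (ht : t ∈ S) :
    ∃ W ∈ Q, ∃ X ∈ P W, t ∈ S ∩ Φ ⁻¹' W ∩ X := by
  obtain ⟨W, hW, htW⟩ : Φ t ∈ ⋃₀ Q := hQ ▸ hSV ht
  obtain ⟨X, hX, htX⟩ : t ∈ ⋃₀ P W := (hP W hW).symm ▸ htW
  exact ⟨W, hW, X, hX, ⟨ht, htW⟩, htX⟩

theorem leU_classPart_kspace (hSV : S ⊆ Φ ⁻¹' V) (hQ : ⋃₀ Q = V)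
    (hP : ∀ W ∈ Q, ⋃₀ P W = Φ ⁻¹' W)
    (hR : ∀ W ∈ Q, ∀ X ∈ P W, ∀ v ∈ W, classOf R v ⊆ classOf (f W X) v)
    (h : ∀ W ∈ Q, ∀ X ∈ P W, leU (classPart W (f W X)) (kspace Φ (S ∩ Φ ⁻¹' W ∩ X) A)) :
    leU (classPart V R) (kspace Φ S A) := by
  rintro _ ⟨t, htS, rfl⟩
  obtain ⟨W, hW, X, hX, ht⟩ := exists_mem_block hSV hQ hP htS
  obtain ⟨_, ⟨v, hv, rfl⟩, hvt⟩ := h W hW X hX _ ⟨t, ht, rfl⟩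
  exact ⟨classOf R v, ⟨v, hQ ▸ subset_sUnion_of_mem hW hv, rfl⟩,
    (hR W hW X hX v hv).trans (hvt.trans (image_obsClass_inter_mono (fun _ h => h.1.1) t))⟩

theorem leL_classPart_kspace (hQ : ⋃₀ Q = V) (hP : ∀ W ∈ Q, (P W).Nonempty)
    (hR : ∀ W ∈ Q, ∀ X ∈ P W, ∀ v ∈ W, classOf R v ⊆ classOf (f W X) v)
    (h : ∀ W ∈ Q, ∀ X ∈ P W, leL (classPart W (f W X)) (kspace Φ (S ∩ Φ ⁻¹' W ∩ X) A)) :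
    leL (classPart V R) (kspace Φ S A) := by
  rintro _ ⟨v, hvV, rfl⟩
  obtain ⟨W, hW, hv⟩ : v ∈ ⋃₀ Q := hQ ▸ hvV
  obtain ⟨X, hX⟩ := hP W hW
  obtain ⟨Y', hY', hvY'⟩ := h W hW X hX _ ⟨v, hv, rfl⟩
  obtain ⟨Y, hY, hY'Y⟩ := kspace_leL_of_subset (fun _ h => h.1.1) Y' hY'
  exact ⟨Y, hY, (hR W hW X hX v hv).trans (hvY'.trans hY'Y)⟩

theorem leCA_classPart_kspace (hSV : S ⊆ Φ ⁻¹' V) (hQ : ⋃₀ Q = V)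
    (hP : ∀ W ∈ Q, ⋃₀ P W = Φ ⁻¹' W)
    (hR : ∀ W ∈ Q, ∀ X ∈ P W, ∀ v ∈ W, classOf R v ⊆ classOf (f W X) v)
    (h : ∀ W ∈ Q, ∀ X ∈ P W,
      leCA W (classPart W (f W X)) (kspace Φ (S ∩ Φ ⁻¹' W ∩ X) A)) :
    leCA V (classPart V R) (kspace Φ S A) := by
  rintro F - ⟨_, ⟨t, htS, rfl⟩, hF⟩
  obtain ⟨W, hW, X, hX, ht⟩ := exists_mem_block hSV hQ hP htS
  have hlocal : Answers W (Φ '' (obsClass A t ∩ (S ∩ Φ ⁻¹' W ∩ X))) (F ∩ W) :=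
    (hF.mono_s18 (image_obsClass_inter_mono (fun _ h => h.1.1) t)).restrict
      (subset_of_mem_kspace (fun _ h => h.1.2) ⟨t, ht, rfl⟩)
  obtain ⟨_, ⟨v, hv, rfl⟩, hvF⟩ :=
    h W hW X hX (F ∩ W) inter_subset_right ⟨_, ⟨t, ht, rfl⟩, hlocal⟩
  exact ⟨classOf R v, ⟨v, hQ ▸ subset_sUnion_of_mem hW hv, rfl⟩,
    (hvF.mono_s18 (hR W hW X hX v hv)).extend (hQ ▸ subset_sUnion_of_mem hW)⟩

theorem leWA_classPart_kspace (hQ : ⋃₀ Q = V) (hP : ∀ W ∈ Q, (P W).Nonempty)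
    (hR : ∀ W ∈ Q, ∀ X ∈ P W, ∀ v ∈ W, classOf R v ⊆ classOf (f W X) v)
    (h : ∀ W ∈ Q, ∀ X ∈ P W,
      leWA W (classPart W (f W X)) (kspace Φ (S ∩ Φ ⁻¹' W ∩ X) A)) :
    leWA V (classPart V R) (kspace Φ S A) := by
  rintro F - hF _ ⟨v, hvV, rfl⟩
  obtain ⟨W, hW, hv⟩ : v ∈ ⋃₀ Q := hQ ▸ hvV
  obtain ⟨X, hX⟩ := hP W hW
  have hlocal : WillAnswer W (kspace Φ (S ∩ Φ ⁻¹' W ∩ X) A) (F ∩ W) := by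
    rintro _ ⟨t, ht, rfl⟩
    exact ((hF _ ⟨t, ht.1.1, rfl⟩).mono_s18
      (image_obsClass_inter_mono (fun _ h => h.1.1) t)).restrict
        (subset_of_mem_kspace (fun _ h => h.1.2) ⟨t, ht, rfl⟩)
  exact ((h W hW X hX (F ∩ W) inter_subset_right hlocal _ ⟨v, hv, rfl⟩).mono_s18
    (hR W hW X hX v hv)).extend (hQ ▸ subset_sUnion_of_mem hW)

end Type2Policy

theorem stmt18_general {T D : Type*} (Φ : T → D) (V : Set D) (A : Setoid T) (S : Set T)
    (hS : S ⊆ Φ ⁻¹' V ∧ Φ '' S = V)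
    (Q : Set (Set D)) (hQ : IsPart Q V)
    (P : Set D → Set (Set T)) (f : Set D → Set T → Set (D × D))
    (hP : ∀ W ∈ Q, IsPart (P W) (Φ ⁻¹' W) ∧ (P W).Nonempty ∧ ∀ X ∈ P W, Φ '' X = W)
    (le : Set D → Set (Set D) → Set (Set D) → Prop)
    (hle : le ∈ ({fun _ => leU, fun _ => leL, fun _ => leEM, leCA, leWA} :
      Set (Set D → Set (Set D) → Set (Set D) → Prop)))
    (hsat : ∀ W ∈ Q,
      (S ∩ Φ ⁻¹' W ⊆ Φ ⁻¹' W ∧ Φ '' (S ∩ Φ ⁻¹' W) = W) ∧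
      ∀ X ∈ P W,
        (S ∩ Φ ⁻¹' W ∩ X ⊆ Φ ⁻¹' W ∧ Φ '' (S ∩ Φ ⁻¹' W ∩ X) = W) ∧
        le W (classPart W (f W X)) (kspace Φ (S ∩ Φ ⁻¹' W ∩ X) A)) :
    le V
      (classPart V ((⋃ W ∈ Q, W ×ˢ W) ∩
        ⋂ W ∈ Q, ((⋂ X ∈ P W, f W X) ∪ (V \ W) ×ˢ (V \ W))))
      (kspace Φ S A) := by
  have hR : ∀ W ∈ Q, ∀ X ∈ P W, ∀ v ∈ W, classOf (policyRel V Q P f) v ⊆ classOf (f W X) v :=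
    fun _ hW _ hX _ hv => classOf_policyRel_subset hW hX hv
  have hPcov : ∀ W ∈ Q, ⋃₀ P W = Φ ⁻¹' W := fun W hW => (hP W hW).1.1.2
  have hPne : ∀ W ∈ Q, (P W).Nonempty := fun W hW => (hP W hW).2.1
  have hlocal := fun W hW X hX => ((hsat W hW).2 X hX).2
  simp only [mem_insert_iff, mem_singleton_iff] at hle
  rcases hle with rfl | rfl | rfl | rfl | rfl
  · exact leU_classPart_kspace hS.1 hQ.1.2 hPcov hR hlocal
  · exact leL_classPart_kspace hQ.1.2 hPne hR hlocal
  · exact ⟨leU_classPart_kspace hS.1 hQ.1.2 hPcov hR fun W hW X hX => (hlocal W hW X hX).1,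
      leL_classPart_kspace hQ.1.2 hPne hR fun W hW X hX => (hlocal W hW X hX).2⟩
  · exact leCA_classPart_kspace hS.1 hQ.1.2 hPcov hR hlocal
  · exact leWA_classPart_kspace hQ.1.2 hPne hR hlocal

/-- Type 2 explicitness: if `S` satisfies the Type 2 policy `⟨Q, g⟩`
(with `g W = ⟨P W, f W⟩` a Type 1 policy over the block `W ∈ Q`) w.r.t. attacker `A`
and order `o ∈ {U, L, EM, CA, WA}`, then
`⟦≈_Q ∧ ⋀_{W∈Q} R†_{g W}⟧ ≤_o K(S, A)`, where `R_{g W} = ⋀_{X ∈ P W} f W X` and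
`R†_{g W} = R_{g W} ∪ All_{V\W}`. -/
theorem stmt18 {T D : Type*} (Φ : T → D) (V : Set D) (A : Setoid T) (S : Set T)
    (hS : S ⊆ Φ ⁻¹' V ∧ Φ '' S = V)
    (Q : Set (Set D)) (hQ : IsPart Q V) (hQne : Q.Nonempty)
    (P : Set D → Set (Set T)) (f : Set D → Set T → Set (D × D))
    (hP : ∀ W ∈ Q, IsPart (P W) (Φ ⁻¹' W) ∧ (P W).Nonempty ∧ ∀ X ∈ P W, Φ '' X = W)
    (hf : ∀ W ∈ Q, ∀ X ∈ P W, IsEROn W (f W X))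
    (le : Set D → Set (Set D) → Set (Set D) → Prop)
    (hle : le ∈ ({fun _ => leU, fun _ => leL, fun _ => leEM, leCA, leWA} :
      Set (Set D → Set (Set D) → Set (Set D) → Prop)))
    (hsat : ∀ W ∈ Q,
      (S ∩ Φ ⁻¹' W ⊆ Φ ⁻¹' W ∧ Φ '' (S ∩ Φ ⁻¹' W) = W) ∧
      ∀ X ∈ P W,
        (S ∩ Φ ⁻¹' W ∩ X ⊆ Φ ⁻¹' W ∧ Φ '' (S ∩ Φ ⁻¹' W ∩ X) = W) ∧
        le W (classPart W (f W X)) (kspace Φ (S ∩ Φ ⁻¹' W ∩ X) A)) :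
    le V
      (classPart V ((⋃ W ∈ Q, W ×ˢ W) ∩
        ⋂ W ∈ Q, ((⋂ X ∈ P W, f W X) ∪ (V \ W) ×ˢ (V \ W))))
      (kspace Φ S A) :=
  stmt18_general Φ V A S hS Q hQ P f hP le hle hsat
end
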